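/- Let C be a self-orthogonal [n,ℓ] code over F_q with generator matrix H. Then [H | I_ℓ] generates an LCD code of length n+ℓ, and no LCD embedding of C has length less than n+ℓ. -/

import Mathlib

open Matrix

variable {F : Type*} [Field F]

/-- Row space of a matrix: the code generated by its rows. -/
def rowSpace {m ι : Type*} (G : Matrix m ι F) : Submodule F (ι → F) :=
  Submodule.span F (Set.range G)

/-- Dual of a code with respect to the form `⟨x, c⟩ = ∑ i, x i * s (c i)`.
For `s = id` this is the Euclidean dual; for `s = (· ^ q)` the Hermitian dual. -/
def sDual {ι : Type*} [Fintype ι] (s : F → F) (C : Submodule F (ι → F)) :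
    Submodule F (ι → F) where
  carrier := {x | ∀ c ∈ C, ∑ i, x i * s (c i) = 0}
  zero_mem' := by intro c hc; simp
  add_mem' := by
    intro a b ha hb c hc
    simp [Pi.add_apply, add_mul, Finset.sum_add_distrib, ha c hc, hb c hc]
  smul_mem' := by
    intro r a ha c hc
    simp [Pi.smul_apply, smul_eq_mul, mul_assoc, ← Finset.mul_sum, ha c hc]

/-- The hull of a code: its intersection with its dual. -/
def sHull {ι : Type*} [Fintype ι] (s : F → F) (C : Submodule F (ι → F)) :
    Submodule F (ι → F) :=
  C ⊓ sDual s C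

/-- `Ct` is an LCD embedding of `C`: `Ct` is LCD and puncturing `Ct` on the
complement of some coordinate subset recovers `C`. -/
def IsLCDEmbedding {ι : Type*} [Fintype ι] {N : ℕ} (s : F → F)
    (C : Submodule F (ι → F)) (Ct : Submodule F (Fin N → F)) : Prop :=
  sHull s Ct = ⊥ ∧ ∃ f : ι → Fin N, Function.Injective f ∧
    Submodule.map (LinearMap.funLeft F F f) Ct = C

/-!
If the Gram matrix `G * Gᵀ` is invertible, `rowSpace G` is LCD: a codeword `y ᵥ* G` orthogonal
to every row satisfies `(G * Gᵀ) *ᵥ y = 0`. For self-orthogonal `C` the Gram matrix of `[H | I]`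
is `H * Hᵀ + 1 = 1`.

Conversely, let `Ct ⊆ F^N` be LCD and puncture onto `C` along an injective `f : ι → Fin N`.
A word of `Ct` vanishing off the range of `f` whose puncturing lies in the hull of `C` pairs with
every `y ∈ Ct` as its puncturing pairs with that of `y`, i.e. to zero; so it lies in the hull of
`Ct` and vanishes. Hence restriction to the `N - |ι|` coordinates off the range of `f` is
injective on the words of `Ct` puncturing into the hull of `C`, and these cover the hull.
-/

open Module

section RowSpace

variable {m ι : Type*} [Fintype m]

lemma rowSpace_eq_range_vecMulLinear (G : Matrix m ι F) :
    rowSpace G = LinearMap.range G.vecMulLinear :=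
  (range_vecMulLinear G).symm

variable [Fintype ι]

lemma mem_sDual_id_rowSpace_iff {G : Matrix m ι F} {x : ι → F} :
    x ∈ sDual id (rowSpace G) ↔ G *ᵥ x = 0 := by
  have hpair : ∀ y : m → F, ∑ i, x i * id ((y ᵥ* G) i) = y ⬝ᵥ (G *ᵥ x) := fun y => by
    rw [dotProduct_mulVec, dotProduct_comm]; rfl
  change (∀ c ∈ rowSpace G, _) ↔ _
  simp only [rowSpace_eq_range_vecMulLinear, LinearMap.mem_range, vecMulLinear_apply,
    forall_exists_index, forall_apply_eq_imp_iff, hpair]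
  exact ⟨fun h => dotProduct_eq_zero _ fun y => by rw [dotProduct_comm, h], fun h y => by
    rw [h, dotProduct_zero]⟩

lemma sHull_id_rowSpace_eq_bot_of_isUnit [DecidableEq m] {G : Matrix m ι F}
    (hG : IsUnit (G * Gᵀ)) : sHull id (rowSpace G) = ⊥ := by
  rw [Submodule.eq_bot_iff]
  intro v hv
  obtain ⟨hv, hvdual⟩ := Submodule.mem_inf.1 hv
  rw [rowSpace_eq_range_vecMulLinear] at hv
  obtain ⟨y, rfl⟩ := hv
  rw [mem_sDual_id_rowSpace_iff, vecMulLinear_apply, mulVec_vecMul] at hvdual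
  have hy : y = 0 := mulVec_injective_iff_isUnit.2 hG (hvdual.trans (mulVec_zero _).symm)
  simp [hy]

lemma mul_transpose_eq_zero_of_le_sDual {H : Matrix m ι F}
    (hH : rowSpace H ≤ sDual id (rowSpace H)) : H * Hᵀ = 0 := by
  ext j k
  have hk : H *ᵥ H k = 0 :=
    mem_sDual_id_rowSpace_iff.1 (hH (Submodule.subset_span (Set.mem_range_self k)))
  simpa [mul_apply, mulVec, dotProduct] using congrFun hk j

lemma fromCols_one_mul_transpose [DecidableEq m] (H : Matrix m ι F) :
    fromCols H (1 : Matrix m m F) * (fromCols H (1 : Matrix m m F))ᵀ = H * Hᵀ + 1 := by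
  rw [transpose_fromCols, fromCols_mul_fromRows, transpose_one, mul_one]

end RowSpace

section Embedding

variable {ι κ : Type*} [Fintype ι] [Fintype κ] {s : F → F}

lemma mem_sDual_of_comp_mem_sDual {C : Submodule F (ι → F)} {Ct : Submodule F (κ → F)}
    {f : ι → κ} (hf : f.Injective) (hCt : Ct.map (LinearMap.funLeft F F f) ≤ C)
    {w : κ → F} (hw : ∀ i ∉ Set.range f, w i = 0) (hwC : w ∘ f ∈ sDual s C) :
    w ∈ sDual s Ct := fun y hy => by
  rw [← Fintype.sum_of_injective f hf (fun j => w (f j) * s (y (f j))) _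
    (fun i hi => by rw [hw i hi, zero_mul]) fun _ => rfl]
  exact hwC _ (hCt (Submodule.mem_map_of_mem hy))

theorem IsLCDEmbedding.card_add_finrank_sHull_le {N : ℕ} {C : Submodule F (ι → F)}
    {Ct : Submodule F (Fin N → F)} (hCt : IsLCDEmbedding s C Ct) :
    Fintype.card ι + finrank F (sHull s C) ≤ N := by
  obtain ⟨hLCD, f, hf, hmap⟩ := hCt
  set P := Ct ⊓ (sHull s C).comap (LinearMap.funLeft F F f)
  let restrict := LinearMap.funLeft F F (Subtype.val : {i // i ∉ Set.range f} → Fin N)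
  have hhull : sHull s C ≤ P.map (LinearMap.funLeft F F f) := by
    intro c hc
    obtain ⟨w, hwCt, rfl⟩ := hmap ▸ hc.1
    exact Submodule.mem_map_of_mem ⟨hwCt, hc⟩
  have hinj : Function.Injective (restrict ∘ₗ P.subtype) := by
    rw [← LinearMap.ker_eq_bot, Submodule.eq_bot_iff]
    rintro ⟨w, hwCt, hwC⟩ hw
    have hw0 : ∀ i ∉ Set.range f, w i = 0 := fun i hi => congrFun hw ⟨i, hi⟩
    have hwhull : w ∈ sHull s Ct :=
      ⟨hwCt, mem_sDual_of_comp_mem_sDual hf hmap.le hw0 (Submodule.mem_inf.1 hwC).2⟩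
    rw [hLCD] at hwhull
    exact Subtype.ext hwhull
  have hcompl : Fintype.card {i // i ∉ Set.range f} = N - Fintype.card ι := by
    rw [Fintype.card_subtype_compl, Fintype.card_fin, Set.card_range_of_injective hf]
  have hP := LinearMap.finrank_le_finrank_of_injective hinj
  rw [finrank_fintype_fun_eq_card, hcompl] at hP
  have hK := (Submodule.finrank_mono hhull).trans (Submodule.finrank_map_le _ P)
  have hι := Fintype.card_le_of_injective f hf
  rw [Fintype.card_fin] at hι
  omega

end Embedding

theorem stmt19_general {F : Type*} [Field F] {n ℓ : ℕ}
    {C : Submodule F (Fin n → F)}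
    (H : Matrix (Fin ℓ) (Fin n) F) (hHC : rowSpace H = C)
    (hind : LinearIndependent F H)
    (hso : C ≤ sDual (id : F → F) C) :
    sHull (id : F → F)
        (rowSpace (fromCols H (1 : Matrix (Fin ℓ) (Fin ℓ) F))) = ⊥ ∧
      ∀ (N : ℕ) (Ct : Submodule F (Fin N → F)),
        IsLCDEmbedding (id : F → F) C Ct → n + ℓ ≤ N := by
  subst hHC
  refine ⟨sHull_id_rowSpace_eq_bot_of_isUnit ?_, fun N Ct hCt => ?_⟩
  · rw [fromCols_one_mul_transpose, mul_transpose_eq_zero_of_le_sDual hso, zero_add]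
    exact isUnit_one
  · have hdim : finrank F (rowSpace H) = ℓ :=
      (finrank_span_eq_card hind).trans (Fintype.card_fin ℓ)
    have hbound := hCt.card_add_finrank_sHull_le
    rwa [sHull, inf_eq_left.2 hso, hdim, Fintype.card_fin] at hbound

/-- for a self-orthogonal `[n, ℓ]` code `C` with generator matrix `H`,
`[H | I_ℓ]` generates an LCD code, and no LCD embedding of `C` has length below `n + ℓ`. -/
theorem stmt19 {F : Type*} [Field F] [Fintype F] {n ℓ : ℕ}
    {C : Submodule F (Fin n → F)}
    (H : Matrix (Fin ℓ) (Fin n) F) (hHC : rowSpace H = C)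
    (hind : LinearIndependent F H)
    (hso : C ≤ sDual (id : F → F) C) :
    sHull (id : F → F)
        (rowSpace (fromCols H (1 : Matrix (Fin ℓ) (Fin ℓ) F))) = ⊥ ∧
      ∀ (N : ℕ) (Ct : Submodule F (Fin N → F)),
        IsLCDEmbedding (id : F → F) C Ct → n + ℓ ≤ N :=
  stmt19_general H hHC hind hso
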